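/- arXiv:2103.08007 — 2 statements merged into one kernel-verified Lean document; each statement's English description precedes it below -/
import Mathlib

section
/- For every fixed γ ∈ [0, 1], the equation 4α⁶ − 16α⁵ + 26α³ − 16α² + 1 = γ·(2α⁶ − 8α⁵ − α⁴ + 14α³ − 10α² + 2α) has exactly one solution α in the open interval (0, 1/2); equivalently, the map α ↦ f(α, γ) has exactly one critical point in (0, 1/2). -/
noncomputable section

/-- Attacker's expected per-block reward (normalized by the block reward) under
Eyal–Sirer selfish mining, numerator. -/
def Na (α γ : ℝ) : ℝ :=
  (-2*α^4 + 5*α^3 - 4*α^2 + α) * γ + 4*α^4 - 9*α^3 + 4*α^2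

/-- Honest miners' expected per-block reward (normalized by the block reward)
under Eyal–Sirer selfish mining, numerator. -/
def Nh (α γ : ℝ) : ℝ :=
  (2*α^4 - 5*α^3 + 4*α^2 - α) * γ - 4*α^4 + 10*α^3 - 6*α^2 - α + 1

/-- Common denominator of the Eyal–Sirer reward expressions. -/
def D (α : ℝ) : ℝ := 2*α^3 - 4*α^2 + 1

/-- Honest miners' share of total effective rewards times `α/(1-α)`; equality
`f α γ = MC/B` characterizes zero honest profit under elastic hash supply. -/
def f (α γ : ℝ) : ℝ := α * Nh α γ / ((1 - α) * (Na α γ + Nh α γ))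

/-!
By the quotient rule, the derivative of `α ↦ f α γ` is `(1 - α)²` times the polynomial of the
first-order condition, divided by a square that does not vanish on `(0, 1/2)`; so both claims
amount to that polynomial having a unique zero there. It is `1` at `0` and `-3/16 + γ/32 < 0` at
`1/2`, and it is strictly decreasing on `[0, 1/2]`: its derivative is affine in `γ` and negative
on `(0, 1/2)` for `γ = 0` and for `γ = 1`.
-/

theorem existsUnique_eq_of_strictAntiOn {α δ : Type*} [ConditionallyCompleteLinearOrder α]
    [TopologicalSpace α] [OrderTopology α] [DenselyOrdered α] [LinearOrder δ] [TopologicalSpace δ]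
    [OrderClosedTopology δ] {g : α → δ} {a b : α} {c : δ} (hab : a ≤ b)
    (hcont : ContinuousOn g (Set.Icc a b)) (hanti : StrictAntiOn g (Set.Icc a b))
    (hb : g b < c) (ha : c < g a) : ∃! x, x ∈ Set.Ioo a b ∧ g x = c := by
  obtain ⟨x, hx, hgx⟩ := intermediate_value_Ioo' hab hcont ⟨hb, ha⟩
  refine ⟨x, ⟨hx, hgx⟩, fun y ⟨hy, hgy⟩ => ?_⟩
  exact hanti.injOn (Set.Ioo_subset_Icc_self hy) (Set.Ioo_subset_Icc_self hx) (hgy.trans hgx.symm)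

def criticalPoly (γ α : ℝ) : ℝ :=
  4*α^6 - 16*α^5 + 26*α^3 - 16*α^2 + 1 - γ * (2*α^6 - 8*α^5 - α^4 + 14*α^3 - 10*α^2 + 2*α)

theorem hasDerivAt_criticalPoly (γ x : ℝ) :
    HasDerivAt (criticalPoly γ)
      (24*x^5 - 80*x^4 + 78*x^2 - 32*x - γ * (12*x^5 - 40*x^4 - 4*x^3 + 42*x^2 - 20*x + 2)) x := by
  have h (n : ℕ) := hasDerivAt_pow n x
  have lhs := ((((h 6).const_mul 4).sub ((h 5).const_mul 16)).add ((h 3).const_mul 26)).sub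
    ((h 2).const_mul 16) |>.add_const 1
  have rhs := (((((h 6).const_mul 2).sub ((h 5).const_mul 8)).sub (h 4)).add
    ((h 3).const_mul 14)).sub ((h 2).const_mul 10) |>.add ((hasDerivAt_id x).const_mul 2)
  exact (lhs.sub (rhs.const_mul γ)).congr_deriv (by push_cast; ring)

/-- The left side is affine in `γ`, so it is enough that it is negative at `γ = 0` (`p₀`) and at
`γ = 1` (`p₁`). -/
theorem criticalPoly_deriv_neg {γ x : ℝ} (hγ0 : 0 ≤ γ) (hγ1 : γ ≤ 1) (hx0 : 0 < x)
    (hx1 : x < 1/2) :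
    24*x^5 - 80*x^4 + 78*x^2 - 32*x - γ * (12*x^5 - 40*x^4 - 4*x^3 + 42*x^2 - 20*x + 2) < 0 := by
  have hy : 0 < 1/2 - x := by linarith
  have hp₀ : 24*x^5 - 80*x^4 + 78*x^2 - 32*x < 0 := by
    have : 24*x^4 - 80*x^3 + 78*x - 32 < 0 := by
      nlinarith [mul_pos hx0 hy, mul_pos (mul_pos hx0 hx0) hx0, sq_nonneg (x * (1/2 - x))]
    nlinarith
  have hp₁ : 12*x^5 - 40*x^4 + 4*x^3 + 36*x^2 - 12*x - 2 < 0 := by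
    nlinarith [mul_pos hx0 hy, mul_pos (mul_pos hx0 hx0) hx0, sq_nonneg (x * (1/2 - x)),
      mul_pos (mul_pos hx0 hx0) (mul_pos hx0 hx0), mul_pos (mul_pos hx0 hy) (mul_pos hx0 hy)]
  rcases le_total (24*x^5 - 80*x^4 + 78*x^2 - 32*x) (12*x^5 - 40*x^4 + 4*x^3 + 36*x^2 - 12*x - 2)
    with h | h
  · nlinarith [mul_nonneg (sub_nonneg.2 hγ1) (sub_nonneg.2 h)]
  · nlinarith [mul_nonneg hγ0 (sub_nonneg.2 h)]

theorem criticalPoly_strictAntiOn {γ : ℝ} (hγ0 : 0 ≤ γ) (hγ1 : γ ≤ 1) :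
    StrictAntiOn (criticalPoly γ) (Set.Icc 0 (1/2)) := by
  refine strictAntiOn_of_hasDerivWithinAt_neg (convex_Icc _ _)
    (fun x _ => (hasDerivAt_criticalPoly γ x).continuousAt.continuousWithinAt)
    (fun x _ => (hasDerivAt_criticalPoly γ x).hasDerivWithinAt) ?_
  rw [interior_Icc]
  exact fun x hx => criticalPoly_deriv_neg hγ0 hγ1 hx.1 hx.2

theorem existsUnique_criticalPoly_eq_zero {γ : ℝ} (hγ0 : 0 ≤ γ) (hγ1 : γ ≤ 1) :
    ∃! α, α ∈ Set.Ioo (0 : ℝ) (1/2) ∧ criticalPoly γ α = 0 := by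
  refine existsUnique_eq_of_strictAntiOn (by norm_num)
    (fun x _ => (hasDerivAt_criticalPoly γ x).continuousAt.continuousWithinAt)
    (criticalPoly_strictAntiOn hγ0 hγ1) ?_ (by norm_num [criticalPoly])
  norm_num [criticalPoly]
  linarith

theorem Na_add_Nh (α γ : ℝ) : Na α γ + Nh α γ = α^3 - 2*α^2 - α + 1 := by
  simp only [Na, Nh]
  ring

theorem hasDerivAt_Nh (γ x : ℝ) :
    HasDerivAt (fun a => Nh a γ)
      ((8*x^3 - 15*x^2 + 8*x - 1) * γ - 16*x^3 + 30*x^2 - 12*x - 1) x := by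
  have h (n : ℕ) := hasDerivAt_pow n x
  have coeff := ((((h 4).const_mul 2).sub ((h 3).const_mul 5)).add ((h 2).const_mul 4)).sub
    (hasDerivAt_id x)
  have := (((coeff.mul_const γ).sub ((h 4).const_mul 4)).add ((h 3).const_mul 10)).sub
    ((h 2).const_mul 6) |>.sub (hasDerivAt_id x) |>.add_const 1
  exact this.congr_deriv (by push_cast; ring)

theorem hasDerivAt_f (γ x : ℝ) (hx : (1 - x) * (x^3 - 2*x^2 - x + 1) ≠ 0) :
    HasDerivAt (fun a => f a γ)
      ((1 - x)^2 * criticalPoly γ x / ((1 - x) * (x^3 - 2*x^2 - x + 1))^2) x := by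
  have num := (hasDerivAt_id x).mul (hasDerivAt_Nh γ x)
  have cubic := (((hasDerivAt_pow 3 x).sub ((hasDerivAt_pow 2 x).const_mul 2)).sub
    (hasDerivAt_id x)).add_const 1
  have den := ((hasDerivAt_id x).const_sub 1).mul cubic
  have := num.div den hx
  simp only [f, Na_add_Nh]
  refine this.congr_deriv ?_
  simp only [Pi.mul_apply, Pi.sub_apply, id, Nh, criticalPoly]
  congr 1
  push_cast
  ring

theorem deriv_f_eq_zero_iff {γ α : ℝ} (h0 : 0 < α) (h1 : α < 1/2) :
    deriv (fun a => f a γ) α = 0 ↔ criticalPoly γ α = 0 := by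
  have hα : 1 - α ≠ 0 := by linarith
  have hcubic : α^3 - 2*α^2 - α + 1 ≠ 0 := by nlinarith [pow_pos h0 3]
  rw [(hasDerivAt_f γ α (mul_ne_zero hα hcubic)).deriv]
  simp [hα, hcubic]

/-- For every fixed `γ ∈ [0,1]`, the first-order condition
`4α⁶ − 16α⁵ + 26α³ − 16α² + 1 = γ(2α⁶ − 8α⁵ − α⁴ + 14α³ − 10α² + 2α)` has
exactly one solution `α ∈ (0, 1/2)`; equivalently, `α ↦ f(α,γ)` has exactly
one critical point in `(0, 1/2)`. -/
theorem unique_critical_point (γ : ℝ) (hγ0 : 0 ≤ γ) (hγ1 : γ ≤ 1) :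
    (∃! α : ℝ, α ∈ Set.Ioo (0 : ℝ) (1/2) ∧
      4*α^6 - 16*α^5 + 26*α^3 - 16*α^2 + 1
        = γ * (2*α^6 - 8*α^5 - α^4 + 14*α^3 - 10*α^2 + 2*α)) ∧
    (∃! α : ℝ, α ∈ Set.Ioo (0 : ℝ) (1/2) ∧ deriv (fun a => f a γ) α = 0) := by
  have h := existsUnique_criticalPoly_eq_zero hγ0 hγ1
  constructor
  · simpa only [criticalPoly, sub_eq_zero] using h
  · refine (existsUnique_congr fun α => and_congr_right fun hα => ?_).2 h
    exact deriv_f_eq_zero_iff hα.1 hα.2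

end
end

section
/- (Proposition 1, equilibrium structure) Fix γ ∈ [0, 1] and a real κ with 0 < κ < sup{f(α, γ) : α ∈ [0, 1/2]}. Then the equation f(α, γ) = κ has exactly two solutions α₁ < α₂ in (0, 1/2); moreover f(α, γ) > κ for all α ∈ (α₁, α₂) and f(α, γ) < κ for all α ∈ (0, α₁) ∪ (α₂, 1/2). In terms of honest hash rate H (related by α = M/(H+M) with κ = CM/B), this says there are exactly two equilibria H*₁ < H*₂, honest miners' profit is positive for H between them and negative outside, so H*₂ is stable and H*₁ is unstable. -/
noncomputable section

/-!
Clearing denominators, `f(·, γ) = N/D` with polynomials `N`, `D` and `D > 0` on `[0, 1/2]`, so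
`∂f/∂α` has the sign of `P = N' D - N D'`. The derivative of `P` factors as `(1 - 2α)` times a
convex combination (in `γ`) of two sextics that are negative on `[0, 1/2]`; hence `P` decreases
strictly from `P(0) = 1` to `P(1/2) < 0`, and `f(·, γ)` rises strictly and then falls strictly.
A continuous function that is zero at both ends and unimodal takes each level strictly between
`0` and its maximum exactly twice, once on each side of the peak.
-/

open Set Polynomial

theorem StrictMonoOn.exists_crossing {g : ℝ → ℝ} {a b κ : ℝ} (hg : StrictMonoOn g (Icc a b))
    (hab : a ≤ b) (hcont : ContinuousOn g (Icc a b)) (ha : g a < κ) (hb : κ < g b) :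
    ∃ c ∈ Ioo a b, g c = κ ∧ (∀ x ∈ Ico a c, g x < κ) ∧ ∀ x ∈ Ioc c b, κ < g x := by
  obtain ⟨c, hc, hgc⟩ := intermediate_value_Ioo hab hcont ⟨ha, hb⟩
  refine ⟨c, hc, hgc, fun x hx => ?_, fun x hx => ?_⟩
  · rw [← hgc]
    exact hg ⟨hx.1, hx.2.le.trans hc.2.le⟩ (Ioo_subset_Icc_self hc) hx.2
  · rw [← hgc]
    exact hg (Ioo_subset_Icc_self hc) ⟨hc.1.le.trans hx.1.le, hx.2⟩ hx.1

theorem StrictAntiOn.exists_crossing {g : ℝ → ℝ} {a b κ : ℝ} (hg : StrictAntiOn g (Icc a b))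
    (hab : a ≤ b) (hcont : ContinuousOn g (Icc a b)) (ha : κ < g a) (hb : g b < κ) :
    ∃ c ∈ Ioo a b, g c = κ ∧ (∀ x ∈ Ico a c, κ < g x) ∧ ∀ x ∈ Ioc c b, g x < κ := by
  obtain ⟨c, hc, hgc, hlt, hgt⟩ :=
    hg.neg.exists_crossing hab hcont.neg (neg_lt_neg ha) (neg_lt_neg hb)
  exact ⟨c, hc, neg_inj.1 hgc, fun x hx => neg_lt_neg_iff.1 (hlt x hx),
    fun x hx => neg_lt_neg_iff.1 (hgt x hx)⟩

theorem exists_two_crossings_of_unimodal {g : ℝ → ℝ} {a m b κ : ℝ} (ham : a ≤ m) (hmb : m ≤ b)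
    (hcont : ContinuousOn g (Icc a b)) (hmono : StrictMonoOn g (Icc a m))
    (hanti : StrictAntiOn g (Icc m b)) (ha : g a < κ) (hb : g b < κ) (hm : κ < g m) :
    ∃ α₁ α₂ : ℝ, α₁ ∈ Ioo a b ∧ α₂ ∈ Ioo a b ∧ α₁ < α₂ ∧ g α₁ = κ ∧ g α₂ = κ ∧
      (∀ α ∈ Ioo a b, g α = κ → α = α₁ ∨ α = α₂) ∧
      (∀ α ∈ Ioo α₁ α₂, g α > κ) ∧
      (∀ α ∈ Ioo a α₁ ∪ Ioo α₂ b, g α < κ) := by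
  obtain ⟨α₁, ⟨ha₁, h₁m⟩, hg₁, hlt₁, hgt₁⟩ :=
    hmono.exists_crossing ham (hcont.mono (Icc_subset_Icc_right hmb)) ha hm
  obtain ⟨α₂, ⟨hm₂, h₂b⟩, hg₂, hgt₂, hlt₂⟩ :=
    hanti.exists_crossing hmb (hcont.mono (Icc_subset_Icc_left ham)) hm hb
  refine ⟨α₁, α₂, ⟨ha₁, h₁m.trans_le hmb⟩, ⟨ham.trans_lt hm₂, h₂b⟩, h₁m.trans hm₂, hg₁, hg₂,
    ?_, ?_, ?_⟩
  · intro α hα hgα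
    rcases le_total α m with hαm | hmα
    · exact .inl (hmono.injOn ⟨hα.1.le, hαm⟩ ⟨ha₁.le, h₁m.le⟩ (hgα.trans hg₁.symm))
    · exact .inr (hanti.injOn ⟨hmα, hα.2.le⟩ ⟨hm₂.le, h₂b.le⟩ (hgα.trans hg₂.symm))
  · intro α ⟨h₁α, hα₂⟩
    rcases le_total α m with hαm | hmα
    · exact hgt₁ α ⟨h₁α, hαm⟩
    · exact hgt₂ α ⟨hmα, hα₂⟩
  · rintro α (⟨haα, hα₁⟩ | ⟨h₂α, hαb⟩)
    · exact hlt₁ α ⟨haα.le, hα₁⟩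
    · exact hlt₂ α ⟨h₂α, hαb.le⟩

def fNum (γ : ℝ) : ℝ[X] :=
  X * (C γ * (2 * X ^ 4 - 5 * X ^ 3 + 4 * X ^ 2 - X) - 4 * X ^ 4 + 10 * X ^ 3 - 6 * X ^ 2 - X + 1)

def fDen : ℝ[X] := (1 - X) * (X ^ 3 - 2 * X ^ 2 - X + 1)

def fDerivNum (γ : ℝ) : ℝ[X] := derivative (fNum γ) * fDen - fNum γ * derivative fDen

theorem f_eq_eval_div (α γ : ℝ) : f α γ = (fNum γ).eval α / fDen.eval α := by
  simp only [f, Na, Nh, fNum, fDen, eval_add, eval_sub, eval_mul, eval_pow, eval_X, eval_C,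
    eval_one, eval_ofNat]
  ring

theorem fDen_pos {α : ℝ} (hα : α ∈ Icc (0 : ℝ) (1 / 2)) : 0 < fDen.eval α := by
  obtain ⟨h0, h1⟩ := hα
  simp only [fDen, eval_add, eval_mul, eval_sub, eval_one, eval_X, eval_pow, eval_ofNat]
  refine mul_pos (by linarith) ?_
  nlinarith [pow_nonneg h0 3, mul_nonneg h0 (by linarith : (0 : ℝ) ≤ 1 - 2 * α)]

theorem hasDerivAt_f_s16 (γ : ℝ) {α : ℝ} (hα : fDen.eval α ≠ 0) :
    HasDerivAt (fun α => f α γ) ((fDerivNum γ).eval α / fDen.eval α ^ 2) α := by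
  have hquot := (Polynomial.hasDerivAt (fNum γ) α).div (Polynomial.hasDerivAt fDen α) hα
  simp only [f_eq_eval_div]
  exact hquot.congr_deriv (by simp [fDerivNum])

theorem continuousOn_f (γ : ℝ) : ContinuousOn (fun α => f α γ) (Icc 0 (1 / 2)) :=
  fun _ hα => (hasDerivAt_f_s16 γ (fDen_pos hα).ne').continuousAt.continuousWithinAt

theorem f_zero (γ : ℝ) : f 0 γ = 0 := by
  simp [f]

theorem f_half (γ : ℝ) : f (1 / 2) γ = 0 := by
  norm_num [f_eq_eval_div, fNum]

theorem fDerivNum_eval_zero (γ : ℝ) : (fDerivNum γ).eval 0 = 1 := by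
  simp [fDerivNum, fNum, fDen]

theorem fDerivNum_eval_half_neg {γ : ℝ} (hγ : γ ≤ 1) : (fDerivNum γ).eval (1 / 2) < 0 := by
  norm_num [fDerivNum, fNum, fDen]
  linarith

theorem fDerivNum_strictAntiOn {γ : ℝ} (hγ0 : 0 ≤ γ) (hγ1 : γ ≤ 1) :
    StrictAntiOn (fun α => (fDerivNum γ).eval α) (Icc 0 (1 / 2)) := by
  refine strictAntiOn_of_deriv_neg (convex_Icc _ _) (Polynomial.continuousOn _) fun x hx => ?_
  rw [interior_Icc] at hx
  obtain ⟨h0, h1⟩ := hx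
  -- `fDerivNum γ` is affine in `γ`; these are `d/dx (fDerivNum γ)` at `γ = 0, 1` divided by `1 - 2x`
  set p₀ := -2 - 34 * x + 106 * x ^ 2 - 60 * x ^ 3 - 70 * x ^ 4 + 76 * x ^ 5 - 16 * x ^ 6
  set p₁ := -4 - 10 * x + 46 * x ^ 2 - 24 * x ^ 3 - 38 * x ^ 4 + 38 * x ^ 5 - 8 * x ^ 6
  have hfactor : (derivative (fDerivNum γ)).eval x = (1 - 2 * x) * ((1 - γ) * p₀ + γ * p₁) := by
    simp [fDerivNum, fNum, fDen, p₀, p₁]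
    ring
  have hp₀ : p₀ < 0 := by
    nlinarith [sq_nonneg (x * (x - 1 / 2)), mul_nonneg (mul_nonneg h0.le h0.le) h0.le,
      mul_nonneg (sub_nonneg.2 h1.le) h0.le]
  have hp₁ : p₁ < 0 := by
    nlinarith [sq_nonneg (x * (x - 1 / 2)), mul_nonneg (mul_nonneg h0.le h0.le) h0.le,
      mul_nonneg (sub_nonneg.2 h1.le) h0.le]
  have hcomb : (1 - γ) * p₀ + γ * p₁ < 0 :=
    convex_Iio (0 : ℝ) hp₀ hp₁ (sub_nonneg.2 hγ1) hγ0 (sub_add_cancel 1 γ)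
  rw [Polynomial.deriv, hfactor]
  exact mul_neg_of_pos_of_neg (by linarith) hcomb

theorem f_unimodal {γ : ℝ} (hγ0 : 0 ≤ γ) (hγ1 : γ ≤ 1) :
    ∃ m ∈ Ioo (0 : ℝ) (1 / 2), StrictMonoOn (fun α => f α γ) (Icc 0 m) ∧
      StrictAntiOn (fun α => f α γ) (Icc m (1 / 2)) := by
  obtain ⟨m, ⟨hm0, hm1⟩, -, hpos, hneg⟩ :=
    (fDerivNum_strictAntiOn hγ0 hγ1).exists_crossing (by norm_num) (Polynomial.continuousOn _)
      (by rw [fDerivNum_eval_zero]; norm_num) (fDerivNum_eval_half_neg hγ1)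
  have hderiv : ∀ x ∈ Ioo (0 : ℝ) (1 / 2),
      deriv (fun α => f α γ) x = (fDerivNum γ).eval x / fDen.eval x ^ 2 :=
    fun x hx => (hasDerivAt_f_s16 γ (fDen_pos (Ioo_subset_Icc_self hx)).ne').deriv
  have hDsq : ∀ x ∈ Ioo (0 : ℝ) (1 / 2), 0 < fDen.eval x ^ 2 :=
    fun x hx => pow_pos (fDen_pos (Ioo_subset_Icc_self hx)) 2
  refine ⟨m, ⟨hm0, hm1⟩, ?_, ?_⟩
  · refine strictMonoOn_of_deriv_pos (convex_Icc _ _)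
      ((continuousOn_f γ).mono (Icc_subset_Icc_right hm1.le)) fun x hx => ?_
    rw [interior_Icc] at hx
    have hx' : x ∈ Ioo (0 : ℝ) (1 / 2) := ⟨hx.1, hx.2.trans hm1⟩
    rw [hderiv x hx']
    exact div_pos (hpos x (Ioo_subset_Ico_self hx)) (hDsq x hx')
  · refine strictAntiOn_of_deriv_neg (convex_Icc _ _)
      ((continuousOn_f γ).mono (Icc_subset_Icc_left hm0.le)) fun x hx => ?_
    rw [interior_Icc] at hx
    have hx' : x ∈ Ioo (0 : ℝ) (1 / 2) := ⟨hm0.trans hx.1, hx.2⟩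
    rw [hderiv x hx']
    exact div_neg_of_neg_of_pos (hneg x (Ioo_subset_Ioc_self hx)) (hDsq x hx')

/-- Proposition 1 (equilibrium structure): for `γ ∈ [0,1]` and
`0 < κ < sup{f(α,γ) : α ∈ [0,1/2]}`, the equation `f(α,γ) = κ` has exactly
two solutions `α₁ < α₂` in `(0,1/2)`, with `f > κ` strictly between them and
`f < κ` outside; via `α = M/(H+M)`, `κ = CM/B`, this says there are exactly
two equilibria `H*₁ < H*₂`, with `H*₂` stable and `H*₁` unstable. -/
theorem two_equilibria (γ : ℝ) (hγ0 : 0 ≤ γ) (hγ1 : γ ≤ 1) (κ : ℝ)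
    (hκ0 : 0 < κ)
    (hκ1 : κ < sSup ((fun α => f α γ) '' Set.Icc (0 : ℝ) (1/2))) :
    ∃ α₁ α₂ : ℝ, α₁ ∈ Set.Ioo (0 : ℝ) (1/2) ∧ α₂ ∈ Set.Ioo (0 : ℝ) (1/2) ∧
      α₁ < α₂ ∧ f α₁ γ = κ ∧ f α₂ γ = κ ∧
      (∀ α ∈ Set.Ioo (0 : ℝ) (1/2), f α γ = κ → α = α₁ ∨ α = α₂) ∧
      (∀ α ∈ Set.Ioo α₁ α₂, f α γ > κ) ∧
      (∀ α ∈ Set.Ioo (0 : ℝ) α₁ ∪ Set.Ioo α₂ (1/2), f α γ < κ) := by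
  obtain ⟨m, hm, hmono, hanti⟩ := f_unimodal hγ0 hγ1
  have hmax : IsMaxOn (fun α => f α γ) (Icc 0 (1 / 2)) m :=
    isMaxOn_Icc_of_mono_anti hmono.monotoneOn hanti.antitoneOn
  have hsup : sSup ((fun α => f α γ) '' Icc (0 : ℝ) (1 / 2)) = f m γ :=
    (hmax.isLUB (Ioo_subset_Icc_self hm)).csSup_eq ((nonempty_Icc.2 (by norm_num)).image _)
  rw [hsup] at hκ1
  exact exists_two_crossings_of_unimodal hm.1.le hm.2.le (continuousOn_f γ) hmono hanti
    (by rwa [f_zero]) (by rwa [f_half]) hκ1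
end
end
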